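/- arXiv:math/0611737 — 2 statements merged into one kernel-verified Lean document; each statement's English description precedes it below -/
import Mathlib

section
/- In the lattice $N_r$ with $4\le r\le 7$, the conic bundle classes, i.e. elements $c\in N_r$ with $(c,c)=0$ and $(c,K_r)=-2$, include $c=\ell_0-\ell_1$; moreover for any conic bundle class $x$ there exists a conic bundle class $y$ with $(x,y)=1$. -/
/-!
The classes `ℓ_i - ℓ_j` and `ℓ_0 - ℓ_i - ℓ_j - ℓ_k` (`i, j, k ≥ 1` distinct) are roots: they
have square `-2` and are orthogonal to `K_r`. Reflecting a conic class `x` in a root `e` with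
`(x,e) = ±1` gives a conic class `y` with `(x,y) = (x,e)² = 1`.

Write `x = a ℓ_0 + ∑ tᵢ ℓᵢ`; then `∑ tᵢ² = a²` and `∑ tᵢ = 2 - 3a`, so Cauchy–Schwarz and
`r ≤ 7` give `1 ≤ a ≤ 5`. In each case two coordinates `tᵢ` differ by one, except for
`a = 2`, `t = (-1, -1, -1, -1)`, where `a + t₁ + t₂ + t₃ = -1`.
-/

def Nform (r : ℕ) (x y : Fin (r + 1) → ℤ) : ℤ :=
  ∑ i : Fin (r + 1), if i = 0 then x i * y i else -(x i * y i)

def Kvec (r : ℕ) : Fin (r + 1) → ℤ := fun i => if i = 0 then -3 else 1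

/-- A conic bundle class: `(c,c) = 0` and `(c,K_r) = -2`. -/
def ConicClass (r : ℕ) (c : Fin (r + 1) → ℤ) : Prop :=
  Nform r c c = 0 ∧ Nform r c (Kvec r) = -2

open Finset

theorem Int.sub_mul_sub_sub_one_nonneg (x m : ℤ) : 0 ≤ (x - m) * (x - m - 1) := by
  rcases le_or_gt (m + 1) x with h | h <;> nlinarith

theorem Fintype.exists_ne_of_sum_ne {ι M : Type*} [Fintype ι] [AddCommMonoid M] {t : ι → M}
    {c : M} (h : ∑ i, t i ≠ Fintype.card ι • c) : ∃ i, t i ≠ c := by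
  by_contra! ht
  exact h (sum_eq_card_nsmul fun i _ => ht i)

section IntegerVectors

variable {ι : Type*} [Fintype ι]

theorem sum_sub_mul_sub_sub_one (t : ι → ℤ) (m : ℤ) :
    ∑ i, (t i - m) * (t i - m - 1) =
      ∑ i, t i ^ 2 - (2 * m + 1) * ∑ i, t i + Fintype.card ι * (m * (m + 1)) := by
  simp only [sub_mul, mul_sub, sum_sub_distrib, ← mul_sum, ← sum_mul, sum_const, card_univ,
    nsmul_eq_mul, sq]
  ring

/-- The hypothesis `h` says that all entries lie in `{m, m + 1}`. -/
theorem exists_eq_add_one_of_sum_sub_mul_sub_sub_one_eq_zero {t : ι → ℤ} {m : ℤ}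
    (h : ∑ i, (t i - m) * (t i - m - 1) = 0) (hm : ∃ i, t i ≠ m) (hm1 : ∃ i, t i ≠ m + 1) :
    ∃ i j, t i = t j + 1 := by
  have hnonneg : ∀ i ∈ univ, 0 ≤ (t i - m) * (t i - m - 1) := fun i _ =>
    Int.sub_mul_sub_sub_one_nonneg (t i) m
  have htwo : ∀ i, t i = m ∨ t i = m + 1 := fun i => by
    rcases mul_eq_zero.1 ((sum_eq_zero_iff_of_nonneg hnonneg).1 h i (mem_univ i)) with h | h
    · exact .inl (by omega)
    · exact .inr (by omega)
  obtain ⟨i, hi⟩ := hm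
  obtain ⟨j, hj⟩ := hm1
  exact ⟨i, j, by have := htwo i; have := htwo j; omega⟩

theorem exists_emod_three_eq_one_of_not_dvd {t : ι → ℤ} (h : ¬ 3 ∣ ∑ i, t i * (t i + 1)) :
    ∃ i, t i % 3 = 1 := by
  contrapose! h
  refine dvd_sum fun i _ => ?_
  rcases (by have := h i; omega : 3 ∣ t i ∨ 3 ∣ t i + 1) with h3 | h3
  · exact dvd_mul_of_dvd_left h3 _
  · exact dvd_mul_of_dvd_right h3 _

/-- The entries lie in `[-3, 0]` since `∑ (tᵢ + 1)(tᵢ + 2) ≤ 2`, and neither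
`∑ tᵢ(tᵢ + 1) = 2` nor `∑ tᵢ(tᵢ - 1) = 16` is divisible by `3`, so some entry is `≡ 1` and
some entry is `≡ 2` modulo `3`: these are `-2` and `-1`. -/
theorem exists_eq_add_one_of_sum_sq_eq_nine (hcard : Fintype.card ι ≤ 7) {t : ι → ℤ}
    (hsq : ∑ i, t i ^ 2 = 9) (hsum : ∑ i, t i = -7) : ∃ i j, t i = t j + 1 := by
  have hrange : ∀ i, -3 ≤ t i ∧ t i ≤ 0 := fun i => by
    have hle := single_le_sum (fun j _ => Int.sub_mul_sub_sub_one_nonneg (t j) (-2)) (mem_univ i)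
    rw [sum_sub_mul_sub_sub_one, hsq, hsum] at hle
    constructor <;> nlinarith
  have hplus : ∑ i, t i * (t i + 1) = 2 := by
    simp only [fun i => show t i * (t i + 1) = t i ^ 2 + t i by ring, sum_add_distrib, hsq, hsum]
    norm_num
  have hminus : ∑ i, -t i * (-t i + 1) = 16 := by
    simp only [fun i => show -t i * (-t i + 1) = t i ^ 2 - t i by ring, sum_sub_distrib, hsq,
      hsum]
    norm_num
  obtain ⟨i, hi⟩ := exists_emod_three_eq_one_of_not_dvd (by rw [hplus]; decide)
  obtain ⟨j, hj⟩ := exists_emod_three_eq_one_of_not_dvd (by rw [hminus]; decide)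
  exact ⟨j, i, by have := hrange i; have := hrange j; omega⟩

end IntegerVectors

theorem exists_adjacent_or_triple {r : ℕ} (h4 : 4 ≤ r) (h7 : r ≤ 7) {a : ℤ} {t : Fin r → ℤ}
    (hsq : ∑ i, t i ^ 2 = a ^ 2) (hsum : ∑ i, t i = 2 - 3 * a) :
    (∃ i j, t i = t j + 1) ∨
      ∃ i j k, i ≠ j ∧ i ≠ k ∧ j ≠ k ∧ a + t i + t j + t k = -1 := by
  have hCS : (2 - 3 * a) ^ 2 ≤ r * a ^ 2 := by
    simpa [hsum, hsq] using sq_sum_le_card_mul_sum_sq (s := univ) (f := t)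
  have hQ (m : ℤ) : ∑ i, (t i - m) * (t i - m - 1) =
      a ^ 2 - (2 * m + 1) * (2 - 3 * a) + r * (m * (m + 1)) := by
    rw [sum_sub_mul_sub_sub_one, hsq, hsum, Fintype.card_fin]
  have hsum_ne (c : ℤ) (hc : 2 - 3 * a ≠ r * c) : ∃ i, t i ≠ c :=
    Fintype.exists_ne_of_sum_ne (by simpa [hsum] using hc)
  obtain ⟨ha1, ha5⟩ : 1 ≤ a ∧ a ≤ 5 := by constructor <;> nlinarith
  interval_cases a
  · left
    exact exists_eq_add_one_of_sum_sub_mul_sub_sub_one_eq_zero (m := -1) (by rw [hQ]; ring)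
      (hsum_ne _ (by omega)) (hsum_ne _ (by omega))
  · by_cases hall : ∀ i, t i = -1
    · right
      refine ⟨⟨0, by omega⟩, ⟨1, by omega⟩, ⟨2, by omega⟩, by simp [Fin.ext_iff],
        by simp [Fin.ext_iff], by simp [Fin.ext_iff], by simp [hall]⟩
    · left
      exact exists_eq_add_one_of_sum_sub_mul_sub_sub_one_eq_zero (m := -1) (by rw [hQ]; ring)
        (not_forall.mp hall) (hsum_ne _ (by omega))
  · left
    exact exists_eq_add_one_of_sum_sq_eq_nine (by simpa using h7) hsq (by rw [hsum]; norm_num)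
  · left
    have hr : (r : ℤ) = 7 := by omega
    exact exists_eq_add_one_of_sum_sub_mul_sub_sub_one_eq_zero (m := -2) (by rw [hQ, hr]; ring)
      (hsum_ne _ (by omega)) (hsum_ne _ (by omega))
  · left
    have hr : (r : ℤ) = 7 := by omega
    exact exists_eq_add_one_of_sum_sub_mul_sub_sub_one_eq_zero (m := -2) (by rw [hQ, hr]; ring)
      (hsum_ne _ (by omega)) (hsum_ne _ (by omega))

section Lattice

variable {r : ℕ}

theorem Nform_eq_sub_sum (x y : Fin (r + 1) → ℤ) :
    Nform r x y = x 0 * y 0 - ∑ i : Fin r, x i.succ * y i.succ := by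
  simp [Nform, Fin.sum_univ_succ, Fin.succ_ne_zero, sub_eq_add_neg]

theorem Nform_comm (x y : Fin (r + 1) → ℤ) : Nform r x y = Nform r y x := by
  simp only [Nform_eq_sub_sum, mul_comm]

theorem Nform_add_right (x y z : Fin (r + 1) → ℤ) :
    Nform r x (y + z) = Nform r x y + Nform r x z := by
  simp only [Nform_eq_sub_sum, Pi.add_apply, mul_add, sum_add_distrib]
  ring

theorem Nform_sub_right (x y z : Fin (r + 1) → ℤ) :
    Nform r x (y - z) = Nform r x y - Nform r x z := by
  simp only [Nform_eq_sub_sum, Pi.sub_apply, mul_sub, sum_sub_distrib]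
  ring

theorem Nform_smul_right (x y : Fin (r + 1) → ℤ) (c : ℤ) :
    Nform r x (c • y) = c * Nform r x y := by
  simp only [Nform_eq_sub_sum, Pi.smul_apply, smul_eq_mul, mul_sub, mul_sum, mul_left_comm]

theorem Nform_add_left (x y z : Fin (r + 1) → ℤ) :
    Nform r (x + y) z = Nform r x z + Nform r y z := by
  rw [Nform_comm, Nform_add_right, Nform_comm z, Nform_comm z]

theorem Nform_smul_left (x y : Fin (r + 1) → ℤ) (c : ℤ) :
    Nform r (c • x) y = c * Nform r x y := by
  rw [Nform_comm, Nform_smul_right, Nform_comm]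

theorem Nform_single_zero_right (x : Fin (r + 1) → ℤ) : Nform r x (Pi.single 0 1) = x 0 := by
  simp [Nform_eq_sub_sum, Fin.succ_ne_zero]

theorem Nform_single_succ_right (x : Fin (r + 1) → ℤ) (i : Fin r) :
    Nform r x (Pi.single i.succ 1) = -x i.succ := by
  simp [Nform_eq_sub_sum, Pi.single_apply, (Fin.succ_ne_zero i).symm]

theorem Nform_Kvec_right (x : Fin (r + 1) → ℤ) :
    Nform r x (Kvec r) = -3 * x 0 - ∑ i : Fin r, x i.succ := by
  simp [Nform_eq_sub_sum, Kvec, Fin.succ_ne_zero, mul_comm]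

theorem conicClass_iff (x : Fin (r + 1) → ℤ) :
    ConicClass r x ↔
      ∑ i : Fin r, x i.succ ^ 2 = x 0 ^ 2 ∧ ∑ i : Fin r, x i.succ = 2 - 3 * x 0 := by
  simp only [ConicClass, Nform_Kvec_right, Nform_eq_sub_sum x x, sq]
  constructor <;> rintro ⟨h₁, h₂⟩ <;> constructor <;> linarith

def IsRootClass (r : ℕ) (e : Fin (r + 1) → ℤ) : Prop :=
  Nform r e e = -2 ∧ Nform r e (Kvec r) = 0

/-- The witness is the reflection `x + (x,e) e` of `x` in the root `e`; it pairs with `x`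
to `(x,e)²`. -/
theorem ConicClass.exists_Nform_eq_one_of_isRootClass {x e : Fin (r + 1) → ℤ}
    (hx : ConicClass r x) (he : IsRootClass r e) (hxe : Nform r x e ^ 2 = 1) :
    ∃ y, ConicClass r y ∧ Nform r x y = 1 := by
  obtain ⟨hxx, hxK⟩ := hx
  obtain ⟨hee, heK⟩ := he
  have hex : Nform r e x = Nform r x e := Nform_comm e x
  refine ⟨x + Nform r x e • e, ⟨?_, ?_⟩, ?_⟩ <;>
    simp only [Nform_add_left, Nform_add_right, Nform_smul_left, Nform_smul_right,
      hxx, hxK, hee, heK, hex]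
  · ring
  · ring
  · linear_combination hxe

theorem isRootClass_single_sub_single {i j : Fin r} (hij : i ≠ j) :
    IsRootClass r (Pi.single i.succ 1 - Pi.single j.succ 1) := by
  refine ⟨?_, ?_⟩
  · simp [Nform_sub_right, Nform_single_succ_right, hij, hij.symm]
  · rw [Nform_comm, Nform_sub_right, Nform_single_succ_right, Nform_single_succ_right]
    simp [Kvec, Fin.succ_ne_zero]

theorem Nform_single_sub_single (x : Fin (r + 1) → ℤ) (i j : Fin r) :
    Nform r x (Pi.single i.succ 1 - Pi.single j.succ 1) = x j.succ - x i.succ := by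
  rw [Nform_sub_right, Nform_single_succ_right, Nform_single_succ_right]
  ring

theorem isRootClass_single_sub_single_sub_single_sub_single {i j k : Fin r}
    (hij : i ≠ j) (hik : i ≠ k) (hjk : j ≠ k) :
    IsRootClass r
      (Pi.single 0 1 - Pi.single i.succ 1 - Pi.single j.succ 1 - Pi.single k.succ 1) := by
  refine ⟨?_, ?_⟩
  · simp [Nform_sub_right, Nform_single_succ_right, Nform_single_zero_right,
      hij, hik, hjk, hij.symm, hik.symm, hjk.symm, Fin.succ_ne_zero]
  · rw [Nform_comm, Nform_sub_right, Nform_sub_right, Nform_sub_right, Nform_single_zero_right,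
      Nform_single_succ_right, Nform_single_succ_right, Nform_single_succ_right]
    simp [Kvec, Fin.succ_ne_zero]

theorem Nform_single_sub_single_sub_single_sub_single (x : Fin (r + 1) → ℤ) (i j k : Fin r) :
    Nform r x (Pi.single 0 1 - Pi.single i.succ 1 - Pi.single j.succ 1 - Pi.single k.succ 1) =
      x 0 + x i.succ + x j.succ + x k.succ := by
  rw [Nform_sub_right, Nform_sub_right, Nform_sub_right, Nform_single_zero_right,
    Nform_single_succ_right, Nform_single_succ_right, Nform_single_succ_right]
  ring

end Lattice

/-- `ℓ_0 - ℓ_1` is a conic bundle class, and for any conic bundle class `x`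
there is a conic bundle class `y` with `(x,y) = 1`. -/
theorem conic_classes (r : ℕ) (h4 : 4 ≤ r) (h7 : r ≤ 7) :
    ConicClass r (fun i => if (i : ℕ) = 0 then 1 else if (i : ℕ) = 1 then -1 else 0) ∧
    ∀ x, ConicClass r x → ∃ y, ConicClass r y ∧ Nform r x y = 1 := by
  refine ⟨?_, fun x hx => ?_⟩
  · obtain ⟨r, rfl⟩ : ∃ s, r = s + 1 := ⟨r - 1, by omega⟩
    simp [conicClass_iff]
  obtain ⟨hsq, hsum⟩ := (conicClass_iff x).1 hx
  rcases exists_adjacent_or_triple h4 h7 hsq hsum with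
    ⟨i, j, hij⟩ | ⟨i, j, k, hij, hik, hjk, hval⟩
  · refine hx.exists_Nform_eq_one_of_isRootClass
      (isRootClass_single_sub_single (i := i) (j := j) fun h => by subst h; omega) ?_
    rw [Nform_single_sub_single, hij]
    ring
  · refine hx.exists_Nform_eq_one_of_isRootClass
      (isRootClass_single_sub_single_sub_single_sub_single hij hik hjk) ?_
    rw [Nform_single_sub_single_sub_single_sub_single, hval]
    norm_num
end

section
/- Let $\ell, \ell'$ be two distinct exceptional classes in $N_r$ ($4\le r \le 7$). Then the intersection index $(\ell, \ell')$ is nonnegative, and $(\ell,\ell') \in \{0, 1, 2, 3\}$. -/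
lemma Nform_eq (r : ℕ) (x y : Fin (r + 1) → ℤ) :
    Nform r x y = x 0 * y 0 - ∑ i : Fin r, x i.succ * y i.succ := by
  unfold Nform
  rw [Fin.sum_univ_succ]
  simp [Fin.succ_ne_zero, sub_eq_add_neg, Finset.sum_neg_distrib]

lemma Nform_symm (r : ℕ) (x y : Fin (r + 1) → ℤ) : Nform r x y = Nform r y x := by
  unfold Nform
  apply Finset.sum_congr rfl
  intros i _
  split <;> ring

lemma Nform_comb (r : ℕ) (a b : ℤ) (x y z : Fin (r + 1) → ℤ) :
    Nform r (fun i => a * x i + b * y i) z = a * Nform r x z + b * Nform r y z := by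
  unfold Nform
  rw [Finset.mul_sum, Finset.mul_sum, ← Finset.sum_add_distrib]
  apply Finset.sum_congr rfl
  intros i _
  split <;> ring

lemma Nform_K_K (r : ℕ) : Nform r (Kvec r) (Kvec r) = 9 - r := by
  rw [Nform_eq]
  simp [Kvec, Fin.succ_ne_zero]

/-- Negative definiteness of the form on the orthogonal complement of `K` for `r ≤ 8`. -/
lemma Nform_negdef (r : ℕ) (h8 : r ≤ 8) (v : Fin (r + 1) → ℤ)
    (hK : Nform r v (Kvec r) = 0) (hv : v ≠ 0) : Nform r v v ≤ -1 := by
  set a : ℤ := v 0 with ha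
  set u : Fin r → ℤ := fun i => v i.succ with hu
  have hS : a * (-3) - ∑ i : Fin r, u i = 0 := by
    have := hK
    rw [Nform_eq] at this
    simpa [Kvec, Fin.succ_ne_zero] using this
  have hvv : Nform r v v = a ^ 2 - ∑ i : Fin r, (u i) ^ 2 := by
    rw [Nform_eq]
    congr 1
    · ring
    · apply Finset.sum_congr rfl; intros; ring
  have hCS : (∑ i : Fin r, u i) ^ 2 ≤ (r : ℤ) * ∑ i : Fin r, (u i) ^ 2 := by
    simpa using sq_sum_le_card_mul_sum_sq (s := (Finset.univ : Finset (Fin r))) (f := u)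
  have hScomp : ∑ i : Fin r, u i = -3 * a := by linarith
  rw [hScomp] at hCS
  have hr : (r : ℤ) ≤ 8 := by exact_mod_cast h8
  have hQ0 : 0 ≤ ∑ i : Fin r, (u i) ^ 2 :=
    Finset.sum_nonneg fun i _ => sq_nonneg _
  rw [hvv]
  by_cases haz : a = 0
  · -- some other coordinate is nonzero
    have : ∃ i, v i ≠ 0 := by
      by_contra h
      push_neg at h
      exact hv (funext h)
    obtain ⟨i, hi⟩ := this
    have hine : i ≠ 0 := by rintro rfl; exact hi (by rw [← ha, haz])
    obtain ⟨j, rfl⟩ := Fin.eq_succ_of_ne_zero hine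
    have huj : u j ≠ 0 := hi
    have h1 : (u j) ^ 2 ≠ 0 := pow_ne_zero 2 huj
    have h2 : 0 ≤ (u j) ^ 2 := sq_nonneg _
    have h3 : (u j) ^ 2 ≤ ∑ i : Fin r, (u i) ^ 2 :=
      Finset.single_le_sum (fun i _ => sq_nonneg (u i)) (Finset.mem_univ j)
    have : 1 ≤ (u j) ^ 2 := by omega
    nlinarith
  · have ha1 : 1 ≤ a ^ 2 := by
      have : a ^ 2 ≠ 0 := pow_ne_zero 2 haz
      have : 0 ≤ a ^ 2 := sq_nonneg a
      omega
    -- 9 a^2 ≤ r Q ≤ 8 Q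
    have h9 : 9 * a ^ 2 ≤ 8 * ∑ i : Fin r, (u i) ^ 2 := by nlinarith
    -- 8 (a^2 - Q) ≤ -a^2 ≤ -1
    have : 8 * (a ^ 2 - ∑ i : Fin r, (u i) ^ 2) ≤ -1 := by linarith
    omega

lemma Nform_negsemidef (r : ℕ) (h8 : r ≤ 8) (v : Fin (r + 1) → ℤ)
    (hK : Nform r v (Kvec r) = 0) : Nform r v v ≤ 0 := by
  by_cases hv : v = 0
  · subst hv
    unfold Nform
    simp
  · linarith [Nform_negdef r h8 v hK hv]

/-- Two distinct exceptional classes have intersection index in `{0,1,2,3}`. -/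
theorem exceptional_intersection_bounds (r : ℕ) (h4 : 4 ≤ r) (h7 : r ≤ 7)
    (l l' : Fin (r + 1) → ℤ)
    (hl : Nform r l l = -1 ∧ Nform r l (Kvec r) = -1)
    (hl' : Nform r l' l' = -1 ∧ Nform r l' (Kvec r) = -1)
    (hne : l ≠ l') :
    0 ≤ Nform r l l' ∧ Nform r l l' ≤ 3 := by
  obtain ⟨hll, hlK⟩ := hl
  obtain ⟨hl'l', hl'K⟩ := hl'
  have h8 : r ≤ 8 := by omega
  set d : ℤ := Nform r l l' with hd
  have hsym : Nform r l' l = d := by rw [Nform_symm]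
  -- lower bound via v = l - l'
  set v : Fin (r + 1) → ℤ := fun i => 1 * l i + (-1) * l' i with hvdef
  have hvK : Nform r v (Kvec r) = 0 := by
    rw [hvdef, Nform_comb, hlK, hl'K]; ring
  have hlv : Nform r l v = -1 - d := by
    rw [Nform_symm, hvdef, Nform_comb, hll, hsym]; ring
  have hl'v : Nform r l' v = d + 1 := by
    rw [Nform_symm, hvdef, Nform_comb, hl'l', ← hd]; ring
  have hvv : Nform r v v = -2 - 2 * d := by
    conv_lhs => rw [hvdef]
    rw [Nform_comb, hlv, hl'v]; ring
  have hvne : v ≠ 0 := by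
    intro h
    apply hne
    funext i
    have := congrFun h i
    simp [hvdef] at this
    linarith
  have hlow := Nform_negdef r h8 v hvK hvne
  rw [hvv] at hlow
  constructor
  · omega
  -- upper bound via w = (9 - r) • (l + l') + 2 • K
  set R : ℤ := 9 - (r : ℤ) with hR
  have hR2 : 2 ≤ R := by
    have : (r : ℤ) ≤ 7 := by exact_mod_cast h7
    omega
  set p : Fin (r + 1) → ℤ := fun i => 1 * l i + 1 * l' i with hpdef
  have hpK : Nform r p (Kvec r) = -2 := by
    rw [hpdef, Nform_comb, hlK, hl'K]; ring
  have hpl : Nform r p l = d - 1 := by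
    rw [hpdef, Nform_comb, hll, hsym]; ring
  have hpl' : Nform r p l' = d - 1 := by
    rw [hpdef, Nform_comb, hl'l', ← hd]; ring
  have hpp : Nform r p p = 2 * d - 2 := by
    conv_lhs => rw [hpdef]
    rw [Nform_comb, Nform_symm r l p, Nform_symm r l' p, hpl, hpl']; ring
  set w : Fin (r + 1) → ℤ := fun i => R * p i + 2 * Kvec r i with hwdef
  have hwK : Nform r w (Kvec r) = 0 := by
    rw [hwdef, Nform_comb, hpK, Nform_K_K, ← hR]; ring
  have hpw : Nform r p w = R * (2 * d - 2) - 4 := by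
    rw [Nform_symm, hwdef, Nform_comb, hpp, Nform_symm r (Kvec r) p, hpK]; ring
  have hKw : Nform r (Kvec r) w = 0 := by rw [Nform_symm]; exact hwK
  have hww : Nform r w w = R * (R * (2 * d - 2) - 4) := by
    conv_lhs => rw [hwdef]
    rw [Nform_comb, hpw, hKw]; ring
  have hup := Nform_negsemidef r h8 w hwK
  rw [hww] at hup
  by_contra hc
  push_neg at hc
  have h1 : 6 ≤ 2 * d - 2 := by omega
  have h2 : 12 ≤ R * (2 * d - 2) := by nlinarith
  have h3 : 0 < R * (R * (2 * d - 2) - 4) := by nlinarith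
  linarith
end
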